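/- Let X ⊆ ℝ^n be a nonempty, compact, convex set and let F : ℝ^n → ℝ be differentiable with gradient ∇F that is Lipschitz continuous with constant L > 0. Let (α_k)_{k≥1} be a positive, nonincreasing sequence with α_k → 0 and Σ_{k≥1} α_k = ∞, let (h^k)_{k≥1} be vectors in ℝ^n with ‖h^k − ∇F(x^{k−1})‖ → 0, and let (x^k)_{k≥0} with x^0 ∈ X be such that for every k ≥ 1, x^k ∈ X minimizes f̂^k(x) = (1/(2α_k))‖x − x^{k−1}‖² + ⟨h^k, x − x^{k−1}⟩ over x ∈ X. Suppose x̄* ∈ X is a strict local minimum of F over X, i.e., there exists r > 0 with F(x) > F(x̄*) for every x ∈ X ∩ B(x̄*, r) with x ≠ x̄*, and x̄* is the unique stationary point of min_{x∈X} F(x) in B(x̄*, r). If some subsequence of (x^k) converges to x̄*, then the whole sequence converges: x^k → x̄* and F(x^k) → F(x̄*). -/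

import Mathlib

open scoped RealInnerProductSpace
open Filter Topology

private lemma my_descent {n : ℕ} (F : EuclideanSpace ℝ (Fin n) → ℝ)
    (G : EuclideanSpace ℝ (Fin n) → EuclideanSpace ℝ (Fin n))
    (hF : ∀ x, HasGradientAt F (G x) x) (L : ℝ)
    (hLip : ∀ x y, ‖G x - G y‖ ≤ L * ‖x - y‖) (p q : EuclideanSpace ℝ (Fin n)) :
    F q ≤ F p + ⟪G p, q - p⟫ + L/2 * ‖q - p‖^2 := by
  set v := q - p with hv
  have hg : ∀ t : ℝ, HasDerivAt (fun t : ℝ => F (p + t • v)) ⟪G (p + t • v), v⟫ t := by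
    intro t
    have hγ : HasDerivAt (fun t : ℝ => p + t • v) v t := by
      simpa using ((hasDerivAt_id t).smul_const v).const_add p
    have := (hF (p + t • v)).hasFDerivAt.comp_hasDerivAt t hγ
    simpa [InnerProductSpace.toDual_apply_apply, Function.comp_def] using this
  set Φ : ℝ → ℝ := fun t => F (p + t • v) - t * ⟪G p, v⟫ - L/2 * t^2 * ‖v‖^2 with hΦdef
  have hΦ : ∀ t : ℝ, HasDerivAt Φ (⟪G (p + t • v), v⟫ - ⟪G p, v⟫ - L/2 * (2*t) * ‖v‖^2) t := by
    intro t
    have h1 : HasDerivAt (fun t : ℝ => t * ⟪G p, v⟫) ⟪G p, v⟫ t := hasDerivAt_mul_const _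
    have h2 : HasDerivAt (fun t : ℝ => L/2 * t^2 * ‖v‖^2) (L/2 * (2*t) * ‖v‖^2) t := by
      have := ((hasDerivAt_pow 2 t).const_mul (L/2)).mul_const (‖v‖^2)
      exact this.congr_deriv (by norm_num)
    exact ((hg t).sub h1).sub h2
  have hanti : AntitoneOn Φ (Set.Icc 0 1) := by
    apply antitoneOn_of_deriv_nonpos (convex_Icc 0 1)
    · exact fun t _ => ((hΦ t).continuousAt).continuousWithinAt
    · exact fun t _ => ((hΦ t).differentiableAt).differentiableWithinAt
    · intro t ht
      rw [interior_Icc] at ht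
      rw [(hΦ t).deriv]
      have hb : ⟪G (p + t • v) - G p, v⟫ ≤ L * t * ‖v‖^2 := by
        calc ⟪G (p + t • v) - G p, v⟫ ≤ ‖G (p + t • v) - G p‖ * ‖v‖ := real_inner_le_norm _ _
        _ ≤ (L * ‖(p + t • v) - p‖) * ‖v‖ := by
            gcongr; exact hLip _ _
        _ = L * t * ‖v‖^2 := by
            simp [norm_smul, abs_of_pos ht.1]; ring
      rw [inner_sub_left] at hb
      nlinarith [hb]
  have h01 := hanti (Set.left_mem_Icc.mpr zero_le_one) (Set.right_mem_Icc.mpr zero_le_one) zero_le_one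
  have hq : p + (1:ℝ) • v = q := by rw [hv]; simp
  have e0 : Φ 0 = F p := by simp [hΦdef]
  have e1 : Φ 1 = F q - ⟪G p, v⟫ - L/2 * ‖v‖^2 := by
    rw [hΦdef]; simp only [hq]; ring
  rw [e0, e1] at h01
  linarith

private lemma trap_descent {a e η D t ip nw : ℝ} (ha : 0 < a) (he : 0 ≤ e)
    (hη : 0 < η) (hD : 0 < D) (hnw0 : 0 ≤ nw) (hnw : nw ≤ D) (hip : ip ≤ -(2*η/3))
    (ht0 : 0 ≤ t) (hteq : 2*D^2*t = a*η) (h3 : 9*D^2*e^2 ≤ η^2) :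
    t^2*nw^2 + 2*a*t*ip + 2*a^2*e^2 ≤ 0 := by
  have hD2 : (0:ℝ) < D^2 := by positivity
  have h1 : t^2*nw^2 ≤ t^2*D^2 :=
    mul_le_mul_of_nonneg_left (pow_le_pow_left₀ hnw0 hnw 2) (sq_nonneg t)
  have h2 : 2*a*t*ip ≤ 2*a*t*(-(2*η/3)) :=
    mul_le_mul_of_nonneg_left hip (by positivity)
  have haeq : a^2*η^2 = 4*D^4*t^2 := by
    calc a^2*η^2 = (a*η)^2 := by ring
    _ = (2*D^2*t)^2 := by rw [hteq]
    _ = 4*D^4*t^2 := by ring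
  have hae : a^2*(9*D^2*e^2) ≤ 4*D^4*t^2 := by
    have := mul_le_mul_of_nonneg_left h3 (sq_nonneg a)
    linarith [this, haeq.le, haeq.ge]
  have hatη : a*t*η = 2*D^2*t^2 := by
    calc a*t*η = t*(a*η) := by ring
    _ = t*(2*D^2*t) := by rw [← hteq]
    _ = 2*D^2*t^2 := by ring
  have h5 : 2*a^2*e^2 ≤ (5/3)*(D^2*t^2) := by
    have hmul : D^2*(2*a^2*e^2) ≤ D^2*((5/3)*(D^2*t^2)) := by
      nlinarith [hae, sq_nonneg (D^2*t)]
    exact le_of_mul_le_mul_left hmul hD2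
  have h6 : 2*a*t*(-(2*η/3)) = -(4/3)*(a*t*η) := by ring
  rw [h6, hatη] at h2
  linarith [h1, h2, h5]

private lemma sq_gap {D e η : ℝ} (he : 0 ≤ e) (hD : 0 < D) (h : 3*D*e ≤ η) :
    9*D^2*e^2 ≤ η^2 := by nlinarith [mul_nonneg (mul_nonneg (by norm_num : (0:ℝ) ≤ 3) hD.le) he]

set_option maxHeartbeats 2000000 in
/-- non-convex-case convergence theorem: if `x̄* ∈ X` is a strict
local minimum of `F` over `X` (on the closed ball `B(x̄*, r)`) and the unique
stationary point of `min_{x∈X} F` in `B(x̄*, r)`, and some subsequence of the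
iterates converges to `x̄*`, then the whole sequence converges:
`x^k → x̄*` and `F(x^k) → F(x̄*)`. -/
theorem stmt17 (n : ℕ) (X : Set (EuclideanSpace ℝ (Fin n))) (hX : X.Nonempty)
    (hcomp : IsCompact X) (hconv : Convex ℝ X)
    (F : EuclideanSpace ℝ (Fin n) → ℝ)
    (Fgrad : EuclideanSpace ℝ (Fin n) → EuclideanSpace ℝ (Fin n))
    (hF : ∀ x, HasGradientAt F (Fgrad x) x)
    (L : ℝ) (hL : 0 < L)
    (hLip : ∀ x y, ‖Fgrad x - Fgrad y‖ ≤ L * ‖x - y‖)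
    (α : ℕ → ℝ) (hαpos : ∀ k, 1 ≤ k → 0 < α k)
    (hαmono : ∀ k, 1 ≤ k → α (k + 1) ≤ α k)
    (hα0 : Tendsto α atTop (𝓝 0))
    (hαdiv : Tendsto (fun m => ∑ k ∈ Finset.Icc 1 m, α k) atTop atTop)
    (h x : ℕ → EuclideanSpace ℝ (Fin n))
    (hherr : Tendsto (fun k => ‖h k - Fgrad (x (k - 1))‖) atTop (𝓝 0))
    (hx0 : x 0 ∈ X) (hxX : ∀ k, 1 ≤ k → x k ∈ X)
    (hmin : ∀ k, 1 ≤ k → ∀ z ∈ X,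
      (1 / (2 * α k)) * ‖x k - x (k - 1)‖ ^ 2 + ⟪h k, x k - x (k - 1)⟫
        ≤ (1 / (2 * α k)) * ‖z - x (k - 1)‖ ^ 2 + ⟪h k, z - x (k - 1)⟫)
    (xbar : EuclideanSpace ℝ (Fin n)) (hxbar : xbar ∈ X)
    (r : ℝ) (hr : 0 < r)
    (hstrict : ∀ z ∈ X ∩ Metric.closedBall xbar r, z ≠ xbar → F xbar < F z)
    (huniq : ∀ y ∈ X, y ∈ Metric.closedBall xbar r →
      (∀ z ∈ X, ⟪z - y, Fgrad y⟫ ≥ 0) → y = xbar)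
    (φ : ℕ → ℕ) (hφ : StrictMono φ)
    (hsub : Tendsto (fun j => x (φ j)) atTop (𝓝 xbar)) :
    Tendsto x atTop (𝓝 xbar) ∧ Tendsto (fun k => F (x k)) atTop (𝓝 (F xbar)) := by
  -- continuity of Fgrad and F
  have hFgrad_cont : Continuous Fgrad := by
    have : LipschitzWith (Real.toNNReal L) Fgrad := by
      apply LipschitzWith.of_dist_le_mul
      intro a b
      rw [dist_eq_norm, dist_eq_norm, Real.coe_toNNReal L hL.le]
      exact hLip a b
    exact this.continuous
  have hFcont : Continuous F :=
    Differentiable.continuous (fun y => ((hF y).hasFDerivAt.differentiableAt))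
  have descent := my_descent F Fgrad hF L hLip
  -- diameter bound
  obtain ⟨C, hC⟩ := Metric.isBounded_iff.mp hcomp.isBounded
  set D : ℝ := max C 1 with hDdef
  have hD1 : (1:ℝ) ≤ D := le_max_right _ _
  have hD0 : (0:ℝ) < D := lt_of_lt_of_le one_pos hD1
  have hDb : ∀ p ∈ X, ∀ q ∈ X, ‖p - q‖ ≤ D := by
    intro p hp q hq
    have := hC hp hq
    rw [dist_eq_norm] at this
    exact le_trans this (le_max_left _ _)
  -- gradient bound
  obtain ⟨M₀, hM₀⟩ := hcomp.exists_bound_of_continuousOn hFgrad_cont.continuousOn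
  set M : ℝ := max M₀ 0 with hMdef
  have hM0 : (0:ℝ) ≤ M := le_max_right _ _
  have hMb : ∀ p ∈ X, ‖Fgrad p‖ ≤ M := fun p hp => le_trans (hM₀ p hp) (le_max_left _ _)
  -- master per-step inequality
  have master : ∀ k : ℕ, 1 ≤ k → α (k+1) * L ≤ 1/2 →
      (‖x (k+1) - x k‖ ≤ 2 * α (k+1) * (M + ‖h (k+1) - Fgrad (x k)‖) ∧
       ∀ z ∈ X, 2 * α (k+1) * F (x (k+1)) ≤ 2 * α (k+1) * F (x k) + ‖z - x k‖^2
          + 2 * α (k+1) * ⟪h (k+1), z - x k⟫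
          + 2 * (α (k+1))^2 * ‖h (k+1) - Fgrad (x k)‖^2) := by
    intro k hk hαL
    have ha : 0 < α (k+1) := hαpos _ (by omega)
    set a := α (k+1) with hadef
    set e := ‖h (k+1) - Fgrad (x k)‖ with hedef
    have he : 0 ≤ e := norm_nonneg _
    set s := ‖x (k+1) - x k‖ with hsdef
    have hs : 0 ≤ s := norm_nonneg _
    have hmin' : ∀ z ∈ X, (1/(2*a)) * s^2 + ⟪h (k+1), x (k+1) - x k⟫
        ≤ (1/(2*a)) * ‖z - x k‖^2 + ⟪h (k+1), z - x k⟫ := by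
      have := hmin (k+1) (by omega)
      simpa [Nat.add_sub_cancel] using this
    have expand : ∀ A B : ℝ, (2*a) * ((1/(2*a))*A + B) = A + 2*a*B := by
      intro A B
      field_simp
    have hz2 : ∀ z ∈ X, s^2 + 2*a*⟪h (k+1), x (k+1) - x k⟫
        ≤ ‖z - x k‖^2 + 2*a*⟪h (k+1), z - x k⟫ := by
      intro z hz
      have h' := mul_le_mul_of_nonneg_left (hmin' z hz) (by positivity : (0:ℝ) ≤ 2*a)
      rw [expand, expand] at h'
      exact h'
    have hxk : x k ∈ X := hxX k hk
    constructor
    · -- step bound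
      have hAz := hz2 (x k) hxk
      simp only [sub_self, norm_zero, inner_zero_right] at hAz
      have hhn : ‖h (k+1)‖ ≤ M + e := by
        have h1 : ‖h (k+1)‖ ≤ ‖Fgrad (x k)‖ + ‖h (k+1) - Fgrad (x k)‖ := by
          have := norm_add_le (Fgrad (x k)) (h (k+1) - Fgrad (x k))
          simpa using this
        have := hMb (x k) hxk
        rw [← hedef] at h1
        linarith
      have hinner : -⟪h (k+1), x (k+1) - x k⟫ ≤ (M+e) * s := by
        have h1 := abs_real_inner_le_norm (h (k+1)) (x (k+1) - x k)
        have h2 : -⟪h (k+1), x (k+1) - x k⟫ ≤ ‖h (k+1)‖ * ‖x (k+1) - x k‖ := by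
          have := neg_abs_le (⟪h (k+1), x (k+1) - x k⟫ : ℝ)
          linarith
        have h3 : ‖h (k+1)‖ * ‖x (k+1) - x k‖ ≤ (M+e) * s := by
          rw [← hsdef]
          exact mul_le_mul_of_nonneg_right hhn hs
        linarith
      -- s^2 ≤ 2a(M+e) s
      have hq : s^2 ≤ 2*a*(M+e)*s := by nlinarith [hAz, hinner, ha]
      rcases eq_or_lt_of_le hs with h0 | h0
      · rw [← h0]; positivity
      · exact le_of_mul_le_mul_right (by nlinarith [hq]) h0
    · -- master inequality
      intro z hz
      have hB := descent (x k) (x (k+1))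
      have hC2 : ⟪Fgrad (x k), x (k+1) - x k⟫ ≤ ⟪h (k+1), x (k+1) - x k⟫ + e * s := by
        have h1 : ⟪Fgrad (x k) - h (k+1), x (k+1) - x k⟫
            ≤ ‖Fgrad (x k) - h (k+1)‖ * ‖x (k+1) - x k‖ := real_inner_le_norm _ _
        rw [inner_sub_left, norm_sub_rev] at h1
        rw [← hedef, ← hsdef] at h1
        linarith
      have hz' := hz2 z hz
      have hB' := mul_le_mul_of_nonneg_left hB (by positivity : (0:ℝ) ≤ 2*a)
      have hC' := mul_le_mul_of_nonneg_left hC2 (by positivity : (0:ℝ) ≤ 2*a)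
      have hLs : a * L * s^2 ≤ (1/2) * s^2 := mul_le_mul_of_nonneg_right hαL (sq_nonneg s)
      nlinarith [hB', hC', hz', hLs, sq_nonneg (s - 2*a*e), ha, he, hs]
  -- shifted tendsto facts
  have hA0 : Tendsto (fun k => α (k+1)) atTop (𝓝 0) := hα0.comp (tendsto_add_atTop_nat 1)
  have hE0 : Tendsto (fun k => ‖h (k+1) - Fgrad (x k)‖) atTop (𝓝 0) := by
    have := hherr.comp (tendsto_add_atTop_nat 1)
    simpa [Nat.add_sub_cancel, Function.comp_def] using this
  -- main lemma: for every ε ∈ (0, r], eventually ‖x k - xbar‖ ≤ ε/2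
  have main : ∀ ε : ℝ, 0 < ε → ε ≤ r → ∃ N, ∀ k, N ≤ k → ‖x k - xbar‖ ≤ ε/2 := by
    intro ε hε hεr
    -- the gap δ on the annulus
    obtain ⟨δ, hδpos, hδ⟩ : ∃ δ > 0, ∀ y ∈ X, ε/2 ≤ ‖y - xbar‖ → ‖y - xbar‖ ≤ r →
        F xbar + δ ≤ F y := by
      set A : Set (EuclideanSpace ℝ (Fin n)) :=
        X ∩ ((fun y => ‖y - xbar‖) ⁻¹' Set.Icc (ε/2) r) with hAdef
      by_cases hA : A.Nonempty
      · have hAc : IsCompact A := hcomp.inter_right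
          (isClosed_Icc.preimage ((continuous_id.sub continuous_const).norm))
        obtain ⟨y₀, hy₀A, hy₀min⟩ := hAc.exists_isMinOn hA hFcont.continuousOn
        have hy₀ne : y₀ ≠ xbar := by
          intro hcontra
          have := hy₀A.2.1
          rw [hcontra] at this
          simp at this
          linarith
        have hlt : F xbar < F y₀ := hstrict y₀
          ⟨hy₀A.1, Metric.mem_closedBall.mpr (by rw [dist_eq_norm]; exact hy₀A.2.2)⟩ hy₀ne
        refine ⟨F y₀ - F xbar, by linarith, ?_⟩
        intro y hyX h1 h2
        have := hy₀min (⟨hyX, h1, h2⟩ : y ∈ A)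
        simp only [Set.mem_setOf_eq] at this
        linarith [this]
      · exact ⟨1, one_pos, fun y hyX h1 h2 => absurd ⟨hyX, h1, h2⟩ (fun hmem => hA ⟨y, hmem⟩)⟩
    -- the stationarity gap η on the high region
    obtain ⟨η, hηpos, hη⟩ : ∃ η > 0, ∀ y ∈ X, ‖y - xbar‖ ≤ r → F xbar + δ/2 ≤ F y →
        ∃ z ∈ X, ⟪z - y, Fgrad y⟫ ≤ -η := by
      by_contra hcon
      push_neg at hcon
      have hcon' : ∀ m : ℕ, ∃ y ∈ X, ‖y - xbar‖ ≤ r ∧ F xbar + δ/2 ≤ F y ∧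
          ∀ z ∈ X, -(1/(m+1) : ℝ) < ⟪z - y, Fgrad y⟫ := by
        intro m
        obtain ⟨y, hyX, hy1, hy2, hy3⟩ := hcon (1/(m+1)) (by positivity)
        exact ⟨y, hyX, hy1, hy2, fun z hz => hy3 z hz⟩
      choose y hyX hyr hyF hy using hcon'
      obtain ⟨yy, hyyX, ψ, hψ, hψlim⟩ := hcomp.tendsto_subseq hyX
      have hyyr : ‖yy - xbar‖ ≤ r := by
        have hcontn : Tendsto (fun i => ‖y (ψ i) - xbar‖) atTop (𝓝 ‖yy - xbar‖) :=
          ((continuous_id.sub continuous_const).norm.tendsto yy).comp hψlim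
        exact le_of_tendsto hcontn (Eventually.of_forall fun i => hyr (ψ i))
      have hyyF : F xbar + δ/2 ≤ F yy := by
        have hcontn : Tendsto (fun i => F (y (ψ i))) atTop (𝓝 (F yy)) :=
          (hFcont.tendsto yy).comp hψlim
        exact ge_of_tendsto hcontn (Eventually.of_forall fun i => hyF (ψ i))
      have hstat : ∀ z ∈ X, ⟪z - yy, Fgrad yy⟫ ≥ 0 := by
        intro z hz
        have hcontn : Tendsto (fun i => ⟪z - y (ψ i), Fgrad (y (ψ i))⟫) atTop
            (𝓝 ⟪z - yy, Fgrad yy⟫) := by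
          have hmap : Continuous (fun u : EuclideanSpace ℝ (Fin n) => ⟪z - u, Fgrad u⟫) :=
            Continuous.inner (continuous_const.sub continuous_id) hFgrad_cont
          exact (hmap.tendsto yy).comp hψlim
        have hlow : ∀ i : ℕ, -(1/(i+1) : ℝ) ≤ ⟪z - y (ψ i), Fgrad (y (ψ i))⟫ := by
          intro i
          have h1 : -(1/(ψ i+1) : ℝ) < ⟪z - y (ψ i), Fgrad (y (ψ i))⟫ := hy (ψ i) z hz
          have h2 : (1/(ψ i+1) : ℝ) ≤ 1/(i+1) := by
            apply one_div_le_one_div_of_le (by positivity)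
            have hii : i ≤ ψ i := hψ.le_apply
            push_cast
            exact_mod_cast by omega
          linarith
        have hzero : Tendsto (fun i : ℕ => -(1/(i+1) : ℝ)) atTop (𝓝 0) := by
          rw [show (0:ℝ) = -0 by norm_num]
          exact (tendsto_one_div_add_atTop_nhds_zero_nat).neg
        exact le_of_tendsto_of_tendsto' hzero hcontn hlow
      have heq : yy = xbar := huniq yy hyyX
        (Metric.mem_closedBall.mpr (by rw [dist_eq_norm]; exact hyyr)) hstat
      rw [heq] at hyyF
      linarith
    -- eventual smallness conditions
    have hc1 : ∀ᶠ k in atTop, α (k+1) * L ≤ 1/2 := by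
      have ht : Tendsto (fun k => α (k+1) * L) atTop (𝓝 0) := by
        simpa using hA0.mul_const L
      exact (ht.eventually_lt_const (by norm_num : (0:ℝ) < 1/2)).mono
        (fun k hk => le_of_lt hk)
    have hc2 : ∀ᶠ k in atTop, α (k+1) * η ≤ 2*D^2 := by
      have ht : Tendsto (fun k => α (k+1) * η) atTop (𝓝 0) := by
        simpa using hA0.mul_const η
      exact (ht.eventually_lt_const (by positivity : (0:ℝ) < 2*D^2)).mono
        (fun k hk => le_of_lt hk)
    have hc3 : ∀ᶠ k in atTop, 2 * α (k+1) * (M+1) ≤ ε/4 := by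
      have ht : Tendsto (fun k => 2 * α (k+1) * (M+1)) atTop (𝓝 0) := by
        have := (hA0.const_mul 2).mul_const (M+1)
        simpa using this
      exact (ht.eventually_lt_const (by positivity : (0:ℝ) < ε/4)).mono
        (fun k hk => le_of_lt hk)
    have hc4 : ∀ᶠ k in atTop, ‖h (k+1) - Fgrad (x k)‖ ≤ 1 :=
      (hE0.eventually_lt_const one_pos).mono (fun k hk => le_of_lt hk)
    have hc5 : ∀ᶠ k in atTop, 3*D*‖h (k+1) - Fgrad (x k)‖ ≤ η := by
      have ht : Tendsto (fun k => 3*D*‖h (k+1) - Fgrad (x k)‖) atTop (𝓝 0) := by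
        have := hE0.const_mul (3*D)
        simpa using this
      exact (ht.eventually_lt_const hηpos).mono (fun k hk => le_of_lt hk)
    have hc6 : ∀ᶠ k in atTop, α (k+1) * ‖h (k+1) - Fgrad (x k)‖^2 ≤ δ/8 := by
      have ht : Tendsto (fun k => α (k+1) * ‖h (k+1) - Fgrad (x k)‖^2) atTop (𝓝 0) := by
        have := hA0.mul (hE0.pow 2)
        simpa using this
      exact (ht.eventually_lt_const (by positivity : (0:ℝ) < δ/8)).mono
        (fun k hk => le_of_lt hk)
    obtain ⟨K, hK⟩ := eventually_atTop.mp
      (hc1.and (hc2.and (hc3.and (hc4.and (hc5.and hc6)))))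
    -- entry point from the subsequence
    have hsubn : Tendsto (fun j => ‖x (φ j) - xbar‖) atTop (𝓝 0) := by
      rw [tendsto_iff_norm_sub_tendsto_zero] at hsub
      exact hsub
    have he1 : ∀ᶠ j in atTop, ‖x (φ j) - xbar‖ ≤ ε/2 :=
      (hsubn.eventually_lt_const (by positivity : (0:ℝ) < ε/2)).mono
        (fun j hj => le_of_lt hj)
    have he2 : ∀ᶠ j in atTop, F (x (φ j)) ≤ F xbar + 3*δ/4 := by
      have hFsub : Tendsto (fun j => F (x (φ j))) atTop (𝓝 (F xbar)) :=
        (hFcont.tendsto xbar).comp hsub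
      exact (hFsub.eventually_lt_const (by linarith : F xbar < F xbar + 3*δ/4)).mono
        (fun j hj => le_of_lt hj)
    have he3 : ∀ᶠ j in atTop, max 1 K ≤ φ j :=
      eventually_atTop.mpr ⟨max 1 K, fun j hj => le_trans hj (hφ.le_apply)⟩
    obtain ⟨j, hj⟩ := eventually_atTop.mp (he1.and (he2.and he3))
    obtain ⟨hj1, hj2, hj3⟩ := hj j (le_refl j)
    set N := φ j with hNdef
    have hN1 : 1 ≤ N := le_trans (le_max_left 1 K) hj3
    have hNK : K ≤ N := le_trans (le_max_right 1 K) hj3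
    -- the invariant
    have inv : ∀ k, N ≤ k → ‖x k - xbar‖ ≤ ε/2 ∧ F (x k) ≤ F xbar + 3*δ/4 := by
      refine Nat.le_induction ⟨hj1, hj2⟩ ?_
      intro k hk ih
      obtain ⟨ihb, ihF⟩ := ih
      have hk1 : 1 ≤ k := le_trans hN1 hk
      have hxk : x k ∈ X := hxX k hk1
      have hxk1 : x (k+1) ∈ X := hxX (k+1) (by omega)
      obtain ⟨hkc1, hkc2, hkc3, hkc4, hkc5, hkc6⟩ := hK k (le_trans hNK hk)
      obtain ⟨hstep, hmast⟩ := master k hk1 hkc1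
      have ha : 0 < α (k+1) := hαpos _ (by omega)
      set a := α (k+1) with hadef
      set e := ‖h (k+1) - Fgrad (x k)‖ with hedef
      have he : 0 ≤ e := norm_nonneg _
      -- step is small
      have hstep' : ‖x (k+1) - x k‖ ≤ ε/4 := by
        have h1 : 2*a*(M+e) ≤ 2*a*(M+1) := by
          apply mul_le_mul_of_nonneg_left _ (by linarith : (0:ℝ) ≤ 2*a)
          linarith
        linarith [hstep]
      -- new ball bound (coarse)
      have hball : ‖x (k+1) - xbar‖ ≤ 3*ε/4 := by
        have h1 : x (k+1) - xbar = (x (k+1) - x k) + (x k - xbar) := by abel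
        calc ‖x (k+1) - xbar‖ = ‖(x (k+1) - x k) + (x k - xbar)‖ := by rw [h1]
        _ ≤ ‖x (k+1) - x k‖ + ‖x k - xbar‖ := norm_add_le _ _
        _ ≤ ε/4 + ε/2 := by gcongr
        _ = 3*ε/4 := by ring
      -- F bound
      have hFnew : F (x (k+1)) ≤ F xbar + 3*δ/4 := by
        rcases le_or_gt (F xbar + δ/2) (F (x k)) with hge | hlt
        · -- descent case: x k is in the high region
          obtain ⟨z, hzX, hzip⟩ := hη (x k) hxk (le_trans ihb (by linarith)) hge
          set w := z - x k with hwdef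
          have hw : ‖w‖ ≤ D := by
            rw [hwdef]
            exact hDb z hzX (x k) hxk
          set t : ℝ := a*η/(2*D^2) with htdef
          have ht0 : 0 ≤ t := by positivity
          have ht1 : t ≤ 1 := by
            rw [htdef, div_le_one (by positivity)]
            linarith [hkc2]
          have hteq : 2*D^2*t = a*η := by
            rw [htdef]
            field_simp
          set zt := (1-t) • x k + t • z with hztdef
          have hztX : zt ∈ X := hconv hxk hzX (by linarith) ht0 (by ring)
          have hztsub : zt - x k = t • w := by
            rw [hztdef, hwdef]
            module
          have hip : ⟪h (k+1), w⟫ ≤ -(2*η/3) := by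
            have h1 : ⟪Fgrad (x k), w⟫ ≤ -η := by rw [hwdef, real_inner_comm]; exact hzip
            have h2 : ⟪h (k+1) - Fgrad (x k), w⟫ ≤ e * ‖w‖ :=
              real_inner_le_norm _ _
            have h3 : e * ‖w‖ ≤ e * D := mul_le_mul_of_nonneg_left hw he
            have h4 : e * D ≤ η/3 := by linarith [hkc5]
            have h5 : ⟪h (k+1), w⟫ = ⟪Fgrad (x k), w⟫ + ⟪h (k+1) - Fgrad (x k), w⟫ := by
              rw [← inner_add_left]
              congr 1
              abel
            rw [h5]
            linarith
          have hm := hmast zt hztX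
          rw [hztsub] at hm
          rw [norm_smul, real_inner_smul_right] at hm
          have hm' : 2*a*F (x (k+1)) ≤ 2*a*F (x k) + t^2*‖w‖^2 + 2*a*t*⟪h (k+1), w⟫
              + 2*a^2*e^2 := by
            have habs : |t| = t := abs_of_nonneg ht0
            calc 2*a*F (x (k+1)) ≤ 2*a*F (x k) + ‖t • w‖^2 + 2*a*(t*⟪h (k+1), w⟫)
                + 2*a^2*e^2 := by
                  have : (‖t • w‖ : ℝ) = |t| * ‖w‖ := by rw [norm_smul]; simp
                  calc 2*a*F (x (k+1)) ≤ 2*a*F (x k) + (|t| * ‖w‖)^2 + 2*a*(t*⟪h (k+1), w⟫)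
                      + 2*a^2*e^2 := by
                        convert hm using 2 <;> ring_nf <;> simp [abs_of_nonneg ht0] <;> ring
                  _ = 2*a*F (x k) + ‖t • w‖^2 + 2*a*(t*⟪h (k+1), w⟫) + 2*a^2*e^2 := by
                        rw [this]
            _ = 2*a*F (x k) + t^2*‖w‖^2 + 2*a*t*⟪h (k+1), w⟫ + 2*a^2*e^2 := by
                  rw [norm_smul, Real.norm_eq_abs, habs]
                  ring
          -- show the non-F terms sum to ≤ 0
          have hneg : t^2*‖w‖^2 + 2*a*t*⟪h (k+1), w⟫ + 2*a^2*e^2 ≤ 0 := by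
            have h3 : 9*D^2*e^2 ≤ η^2 := sq_gap he hD0 hkc5
            exact trap_descent ha he hηpos hD0 (norm_nonneg _) hw hip ht0 hteq h3
          have hfinal : 2*a*F (x (k+1)) ≤ 2*a*F (x k) := by linarith [hm', hneg]
          have : F (x (k+1)) ≤ F (x k) :=
            le_of_mul_le_mul_left (by linarith [hfinal]) (by linarith : (0:ℝ) < 2*a)
          linarith
        · -- creep case
          have hm := hmast (x k) hxk
          simp only [sub_self, norm_zero, inner_zero_right] at hm
          have : F (x (k+1)) ≤ F (x k) + a*e^2 := by
            have h1 : 2*a*F (x (k+1)) ≤ 2*a*(F (x k) + a*e^2) := by ring_nf; ring_nf at hm; linarith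
            exact le_of_mul_le_mul_left h1 (by linarith : (0:ℝ) < 2*a)
          have h2 : a*e^2 ≤ δ/8 := hkc6
          linarith
      refine ⟨?_, hFnew⟩
      -- new ball bound (fine): cannot be in the annulus
      by_contra hfar
      push_neg at hfar
      have h1 : ε/2 ≤ ‖x (k+1) - xbar‖ := le_of_lt hfar
      have h2 : ‖x (k+1) - xbar‖ ≤ r := le_trans hball (by linarith)
      have := hδ (x (k+1)) hxk1 h1 h2
      linarith
    exact ⟨N, fun k hk => (inv k hk).1⟩
  -- conclude
  have hx_tendsto : Tendsto x atTop (𝓝 xbar) := by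
    rw [Metric.tendsto_atTop]
    intro ε' hε'
    obtain ⟨N, hN⟩ := main (min ε' r) (lt_min hε' hr) (min_le_right _ _)
    refine ⟨N, fun k hk => ?_⟩
    have h1 := hN k hk
    rw [dist_eq_norm]
    calc ‖x k - xbar‖ ≤ min ε' r / 2 := h1
    _ ≤ ε'/2 := by
        have := min_le_left ε' r
        linarith
    _ < ε' := by linarith
  exact ⟨hx_tendsto, (hFcont.tendsto xbar).comp hx_tendsto⟩
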